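/- Let f be a modular form of weight k on SL2(Z) and let T_n be the n-th Hecke operator. Then δ_k(T_n f) = (1/n)·T_n(δ_k f), where on the left T_n acts in weight k and on the right T_n acts in weight k+2. -/

import Mathlib

/-!
Write `T_n f = ∑_{d ∣ n} ∑_{b < d} f ∣[k] g_{d,b}` with `g_{d,b} = [[n/d, b], [0, d]]`, all of
determinant `n`. The theorem then follows from the `GL₂(ℝ)⁺`-equivariance
`δ_k (F ∣[k] g) = (det g)⁻¹ • (δ_k F ∣[k+2] g)` (the factor `det g` comes from the `|det g| ^ (k - 1)`
normalisation of Mathlib's slash action). For this equivariance, `d/dz` transforms under slash up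
to an error term `c / (cτ + d)`, and `1 / Im τ` transforms up to exactly the opposite error term,
because `conj (cτ + d) = cτ + d - 2i c Im τ`.
-/

open UpperHalfPlane Complex Finset

noncomputable section

/-- Derivative of a function on the upper half-plane. -/
def dz (f : ℍ → ℂ) (τ : ℍ) : ℂ := deriv (f ∘ ofComplex) τ

/-- Iterated derivative. -/
def dzIter : ℕ → (ℍ → ℂ) → (ℍ → ℂ)
  | 0 => id
  | (a + 1) => fun f => dz (dzIter a f)

/-- The Maass-Shimura operator of weight `k`. -/
def delta (k : ℤ) (f : ℍ → ℂ) : ℍ → ℂ :=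
  fun τ => (1 / (2 * Real.pi * Complex.I)) * ((k / (2 * Complex.I * τ.im)) * f τ + dz f τ)

/-- Iterated Maass-Shimura operator `δ_k^{(r)} = δ_{k+2r-2} ∘ ⋯ ∘ δ_k`. -/
def deltaIter (k : ℤ) : ℕ → (ℍ → ℂ) → (ℍ → ℂ)
  | 0 => id
  | (r + 1) => fun f => delta (k + 2 * r) (deltaIter k r f)

/-- The `n`-th Hecke operator in weight `k` (level one). -/
def hecke (k : ℤ) (n : ℕ) (f : ℍ → ℂ) : ℍ → ℂ :=
  fun τ => (n : ℂ) ^ (k - 1) * ∑ d ∈ n.divisors, (d : ℂ) ^ (-k) *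
    ∑ b ∈ Finset.range d, f (ofComplex ((n * τ + b * d) / (d : ℂ) ^ 2))

/-- The Rankin-Cohen bracket of index `j` of forms of weights `k` and `l`. -/
def RC (k l : ℕ) (j : ℕ) (f g : ℍ → ℂ) : ℍ → ℂ :=
  fun τ => (1 / (2 * Real.pi * Complex.I)) ^ j * ∑ a ∈ Finset.range (j + 1),
    (-1 : ℂ) ^ a * ((j + k - 1).choose (j - a)) * ((j + l - 1).choose a) *
      dzIter a f τ * dzIter (j - a) g τ

/-- The normalized Eisenstein series of weight `k`, via its `q`-expansion. -/
def E (k : ℕ) : ℍ → ℂ :=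
  fun τ => 1 - (2 * k / ((bernoulli k : ℚ) : ℂ)) *
    ∑' n : ℕ, (∑ d ∈ (n + 1).divisors, (d : ℂ) ^ (k - 1)) *
      Complex.exp (2 * Real.pi * Complex.I * (n + 1) * τ)

/-- The discriminant cusp form `Δ = q ∏ (1 - qⁿ)²⁴`. -/
def Disc : ℍ → ℂ :=
  fun τ => Complex.exp (2 * Real.pi * Complex.I * τ) *
    ∏' n : ℕ, (1 - Complex.exp (2 * Real.pi * Complex.I * τ) ^ (n + 1)) ^ 24

open scoped Manifold ComplexConjugate ModularForm
open Derivative Matrix.GeneralLinearGroup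

lemma delta_eq_add_normalizedDerivOfComplex (k : ℤ) (F : ℍ → ℂ) :
    delta k F =
      (fun τ ↦ (2 * Real.pi * Complex.I)⁻¹ * k * (2 * Complex.I * τ.im)⁻¹ * F τ) + D F := by
  ext τ
  simp only [delta, dz, normalizedDerivOfComplex, Pi.add_apply]
  ring

lemma dz_sum {ι : Type*} (s : Finset ι) {F : ι → ℍ → ℂ} (hF : ∀ i ∈ s, MDiff (F i)) (τ : ℍ) :
    dz (∑ i ∈ s, F i) τ = ∑ i ∈ s, dz (F i) τ := by
  have hcomp : (∑ i ∈ s, F i) ∘ ofComplex = fun z ↦ ∑ i ∈ s, (F i ∘ ofComplex) z := by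
    ext; simp [Finset.sum_apply]
  rw [dz, hcomp, deriv_fun_sum fun i hi ↦ mdifferentiableAt_iff.mp (hF i hi τ)]
  rfl

lemma delta_sum {ι : Type*} (k : ℤ) (s : Finset ι) {F : ι → ℍ → ℂ}
    (hF : ∀ i ∈ s, MDiff (F i)) : delta k (∑ i ∈ s, F i) = ∑ i ∈ s, delta k (F i) := by
  ext τ
  simp only [delta, dz_sum s hF, Finset.sum_apply, ← Finset.sum_add_distrib, Finset.mul_sum]

lemma conj_denom (g : GL (Fin 2) ℝ) (τ : ℍ) :
    conj (denom g τ) = denom g τ - 2 * Complex.I * g 1 0 * τ.im :=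
  Complex.ext (by simp [denom]) (by simp [denom]; ring)

lemma inv_two_I_im_smul {g : GL (Fin 2) ℝ} (hg : 0 < g.det.val) (τ : ℍ) :
    (2 * Complex.I * (g • τ).im : ℂ)⁻¹ =
      denom g τ ^ 2 / g.det.val * ((2 * Complex.I * τ.im)⁻¹ - g 1 0 / denom g τ) := by
  have hj := denom_ne_zero g τ
  have hy : (τ.im : ℂ) ≠ 0 := ofReal_ne_zero.mpr τ.im_pos.ne'
  have hdet : (g.det.val : ℂ) ≠ 0 := ofReal_ne_zero.mpr hg.ne'
  rw [im_smul_eq_div_normSq, abs_of_pos hg, ofReal_div, ofReal_mul, ← Complex.mul_conj,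
    conj_denom]
  field_simp

lemma slash_apply_of_det_pos {g : GL (Fin 2) ℝ} (hg : 0 < g.det.val) (k : ℤ) (F : ℍ → ℂ)
    (τ : ℍ) : (F ∣[k] g) τ = F (g • τ) * (g.det.val : ℂ) ^ (k - 1) * denom g τ ^ (-k) := by
  rw [ModularForm.slash_apply, σ, if_pos hg, ContinuousAlgEquiv.refl_apply, abs_of_pos hg]

lemma delta_slash {F : ℍ → ℂ} (hF : MDiff F) {g : GL (Fin 2) ℝ} (hg : 0 < g.det.val)
    (k : ℤ) : delta k (F ∣[k] g) = (g.det.val : ℂ)⁻¹ • (delta k F ∣[k + 2] g) := by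
  rw [delta_eq_add_normalizedDerivOfComplex, delta_eq_add_normalizedDerivOfComplex,
    SlashAction.add_slash, normalizedDerivOfComplex_slash hF (val_det_apply g ▸ hg)]
  ext τ
  simp only [Pi.add_apply, Pi.smul_apply, smul_eq_mul, slash_apply_of_det_pos hg,
    inv_two_I_im_smul hg, ← val_det_apply]
  have hj := denom_ne_zero g τ
  have hdet : (g.det.val : ℂ) ≠ 0 := ofReal_ne_zero.mpr hg.ne'
  rw [show k + 2 - 1 = (k - 1) + 2 by ring, show -(k + 2) = -k - 2 by ring, zpow_add₀ hdet,
    zpow_sub₀ hj]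
  field_simp
  ring

def heckeMatrix {n : ℕ} (d : n.divisors) (b : ℕ) : GL (Fin 2) ℝ :=
  mkOfDetNeZero !![(n / d : ℝ), b; 0, d] <| by
    simpa [Matrix.det_fin_two_of, (Nat.pos_of_mem_divisors d.2).ne'] using
      Nat.ne_zero_of_mem_divisors d.2

section heckeMatrix

variable {n : ℕ} (d : n.divisors) (b : ℕ)

lemma det_heckeMatrix : (heckeMatrix d b).det.val = n := by
  simp [heckeMatrix, Matrix.det_fin_two_of, (Nat.pos_of_mem_divisors d.2).ne']

lemma denom_heckeMatrix (τ : ℍ) : denom (heckeMatrix d b) τ = d := by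
  simp [heckeMatrix, denom]

lemma det_heckeMatrix_pos : 0 < (heckeMatrix d b).det.val := by
  rw [det_heckeMatrix]
  exact_mod_cast Nat.pos_of_ne_zero (Nat.ne_zero_of_mem_divisors d.2)

lemma coe_heckeMatrix_smul (τ : ℍ) :
    ((heckeMatrix d b • τ : ℍ) : ℂ) = (n * τ + b * d) / (d : ℂ) ^ 2 := by
  have hd : (d : ℂ) ≠ 0 := by exact_mod_cast (Nat.pos_of_mem_divisors d.2).ne'
  rw [coe_smul_of_det_pos (det_heckeMatrix_pos d b), num, denom_heckeMatrix]
  simp [heckeMatrix]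
  field_simp

lemma slash_heckeMatrix (k : ℤ) (f : ℍ → ℂ) (τ : ℍ) :
    (f ∣[k] heckeMatrix d b) τ =
      (n : ℂ) ^ (k - 1) * (d : ℂ) ^ (-k) * f (ofComplex ((n * τ + b * d) / (d : ℂ) ^ 2)) := by
  rw [slash_apply_of_det_pos (det_heckeMatrix_pos d b), ← coe_heckeMatrix_smul, ofComplex_apply,
    denom_heckeMatrix, det_heckeMatrix]
  push_cast
  ring

end heckeMatrix

lemma hecke_eq_sum_slash (k : ℤ) (n : ℕ) (f : ℍ → ℂ) :
    hecke k n f = ∑ d : n.divisors, ∑ b ∈ Finset.range d, f ∣[k] heckeMatrix d b := by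
  ext τ
  simp only [hecke, Finset.sum_apply, slash_heckeMatrix, Finset.mul_sum, mul_assoc]
  exact (Finset.sum_coe_sort n.divisors _).symm

theorem delta_hecke_comm_general (k : ℤ) (n : ℕ)
    (f : ModularForm (CongruenceSubgroup.Gamma 1) k) :
    delta k (hecke k n ⇑f) = ((n : ℂ)⁻¹) • hecke (k + 2) n (delta k ⇑f) := by
  have hf : MDiff f := f.holo'
  rw [hecke_eq_sum_slash, hecke_eq_sum_slash, Finset.smul_sum,
    delta_sum _ _ fun d _ ↦ MDifferentiable.sum fun b _ ↦ hf.slash k _]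
  refine Finset.sum_congr rfl fun d _ ↦ ?_
  rw [delta_sum _ _ fun b _ ↦ hf.slash k _, Finset.smul_sum]
  refine Finset.sum_congr rfl fun b _ ↦ ?_
  rw [delta_slash hf (det_heckeMatrix_pos d b), det_heckeMatrix, ofReal_natCast]

/-- `δ_k` and `T_n` almost commute (base case). -/
theorem delta_hecke_comm (k : ℤ) (hk : Even k) (hk0 : 0 < k) (n : ℕ) (hn : 0 < n)
    (f : ModularForm (CongruenceSubgroup.Gamma 1) k) :
    delta k (hecke k n ⇑f) = ((n : ℂ)⁻¹) • hecke (k + 2) n (delta k ⇑f) :=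
  delta_hecke_comm_general k n f

end
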